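/- For a cost-minimization over pricing kernels, the map ξ ↦ E[ξ F^{-1}(1 − F̂_ξ(ξ; U))] is concave on any convex set of nonnegative random variables: for ξ₁, ξ₂ and λ ∈ (0,1), letting Z_λ = λξ₁ + (1−λ)ξ₂, one has E[Z_λ F^{-1}(1 − F̂_{Z_λ}(Z_λ; U))] ≥ λ E[ξ₁ F^{-1}(1 − F̂_{ξ₁}(ξ₁; U))] + (1−λ) E[ξ₂ F^{-1}(1 − F̂_{ξ₂}(ξ₂; U))]. -/

import Mathlib

open MeasureTheory ProbabilityTheory Set

/-- The cumulative distribution function of a random variable. -/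
noncomputable def cdfOf {Ω : Type*} [MeasurableSpace Ω] (P : Measure Ω) (X : Ω → ℝ) :
    ℝ → ℝ := fun x => (P {ω | X ω ≤ x}).toReal

/-- The left-continuous generalized inverse (quantile function) of a cdf. -/
noncomputable def quantileOf (F : ℝ → ℝ) (p : ℝ) : ℝ := sInf {x : ℝ | p ≤ F x}

/-- The distributional transform of `ξ`, randomized by `U`. -/
noncomputable def distTransform {Ω : Type*} [MeasurableSpace Ω] (P : Measure Ω)
    (ξ U : Ω → ℝ) : Ω → ℝ :=
  fun ω => (P {a | ξ a < ξ ω}).toReal + U ω * (P {a | ξ a = ξ ω}).toReal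

/-!
Write `Φ u = F⁻¹(1 - u)`, which is antitone on `(0, 1)`, and `V = F̂_{Z_λ}(Z_λ; U)`. Since
`E[Z_λ Φ(V)] = λ E[ξ₁ Φ(V)] + (1 - λ) E[ξ₂ Φ(V)]`, it suffices to show
`E[ξ Φ(F̂_ξ(ξ; U))] ≤ E[ξ Φ(V)]` for `ξ = ξ₁, ξ₂`.

Both `W = F̂_ξ(ξ; U)` and `V` are uniform on `(0, 1)`, and `W ≤ F_ξ(ξ)`; hence
`{ξ > s} = {W > F_ξ(s)}` almost surely. By the layer-cake formula
`E[ξ g] = ∫₀^∞ E[g; ξ > s] ds` it is enough to compare `E[Φ(W); ξ > s]` with `E[Φ(V); ξ > s]`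
for each `s`. The former equals `E[Φ(V); V > F_ξ(s)]`, and since `Φ` is antitone, among all events
of probability `1 - F_ξ(s)` the event `{V > F_ξ(s)}` minimises `E[Φ(V); ·]`.
-/

open Filter Topology Function

section Cdf

variable {Ω : Type*} [MeasurableSpace Ω]

lemma monotone_cdfOf (P : Measure Ω) [IsFiniteMeasure P] (X : Ω → ℝ) : Monotone (cdfOf P X) :=
  fun _ _ h => ENNReal.toReal_mono (measure_ne_top _ _) (measure_mono fun _ hω => le_trans hω h)

lemma leftLim_cdfOf_nonneg (P : Measure Ω) [IsFiniteMeasure P] (X : Ω → ℝ) (x : ℝ) :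
    0 ≤ leftLim (cdfOf P X) x :=
  ENNReal.toReal_nonneg.trans ((monotone_cdfOf P X).le_leftLim (sub_one_lt x))

lemma cdfOf_le_one (P : Measure Ω) [IsProbabilityMeasure P] (X : Ω → ℝ) (x : ℝ) :
    cdfOf P X x ≤ 1 :=
  ENNReal.toReal_le_of_le_ofReal zero_le_one (by simpa using prob_le_one)

variable {P : Measure Ω} [IsProbabilityMeasure P] {X : Ω → ℝ}

lemma cdfOf_eq_cdf_map (hX : AEMeasurable X P) : cdfOf P X = cdf (P.map X) := by
  have := Measure.isProbabilityMeasure_map hX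
  ext x
  rw [cdf_eq_real, measureReal_def, Measure.map_apply_of_aemeasurable hX measurableSet_Iic]
  rfl

lemma measure_preimage_Iio_eq_leftLim (hX : AEMeasurable X P) (x : ℝ) :
    P (X ⁻¹' Iio x) = ENNReal.ofReal (leftLim (cdfOf P X) x) := by
  have := Measure.isProbabilityMeasure_map hX
  rw [← Measure.map_apply_of_aemeasurable hX measurableSet_Iio, ← measure_cdf (P.map X),
    (cdf (P.map X)).measure_Iio (tendsto_cdf_atBot _), sub_zero, cdfOf_eq_cdf_map hX]

lemma measure_preimage_singleton_eq_sub_leftLim (hX : AEMeasurable X P) (x : ℝ) :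
    P (X ⁻¹' {x}) = ENNReal.ofReal (cdfOf P X x - leftLim (cdfOf P X) x) := by
  have := Measure.isProbabilityMeasure_map hX
  rw [← Measure.map_apply_of_aemeasurable hX (measurableSet_singleton x), ← measure_cdf (P.map X),
    (cdf (P.map X)).measure_singleton, cdfOf_eq_cdf_map hX]

lemma distTransform_eq (hX : AEMeasurable X P) (U : Ω → ℝ) (ω : Ω) :
    distTransform P X U ω = leftLim (cdfOf P X) (X ω)
      + U ω * (cdfOf P X (X ω) - leftLim (cdfOf P X) (X ω)) := by
  change (P (X ⁻¹' Iio (X ω))).toReal + U ω * (P (X ⁻¹' {X ω})).toReal = _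
  rw [measure_preimage_Iio_eq_leftLim hX, measure_preimage_singleton_eq_sub_leftLim hX,
    ENNReal.toReal_ofReal (leftLim_cdfOf_nonneg P X _),
    ENNReal.toReal_ofReal (sub_nonneg.2 ((monotone_cdfOf P X).leftLim_le le_rfl))]

end Cdf

lemma volume_restrict_Ioo_zero_one_Iic (a : ℝ) :
    volume.restrict (Ioo (0 : ℝ) 1) (Iic a) = ENNReal.ofReal (min a 1) := by
  rw [Measure.restrict_congr_set Ioo_ae_eq_Ioc, Measure.restrict_apply measurableSet_Iic,
    inter_comm, Ioc_inter_Iic, Real.volume_Ioc, sub_zero, min_comm]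

section Uniform

variable {Ω : Type*} [MeasurableSpace Ω] {P : Measure Ω} {V : Ω → ℝ}

lemma ae_mem_Ioo_of_map_eq (hV : AEMeasurable V P)
    (hVlaw : P.map V = volume.restrict (Ioo (0 : ℝ) 1)) : ∀ᵐ ω ∂P, V ω ∈ Ioo (0 : ℝ) 1 :=
  ae_of_ae_map hV (hVlaw ▸ ae_restrict_mem measurableSet_Ioo)

lemma measure_preimage_Iic_of_map_eq (hV : AEMeasurable V P)
    (hVlaw : P.map V = volume.restrict (Ioo (0 : ℝ) 1)) {b : ℝ} (hb : b ≤ 1) :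
    P (V ⁻¹' Iic b) = ENNReal.ofReal b := by
  rw [← min_eq_left hb, ← volume_restrict_Ioo_zero_one_Iic, ← hVlaw,
    Measure.map_apply_of_aemeasurable hV measurableSet_Iic, min_eq_left hb]

lemma map_eq_restrict_Ioo_of_measure_le [IsProbabilityMeasure P] (hV : Measurable V)
    (h : ∀ t ∈ Ioo (0 : ℝ) 1, P {ω | V ω ≤ t} = ENNReal.ofReal t) :
    P.map V = volume.restrict (Ioo (0 : ℝ) 1) := by
  have := Measure.isProbabilityMeasure_map (μ := P) hV.aemeasurable
  refine Measure.ext_of_Iic _ _ fun a => ?_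
  rw [volume_restrict_Ioo_zero_one_Iic, Measure.map_apply hV measurableSet_Iic]
  change P {ω | V ω ≤ a} = _
  rcases le_or_gt a 0 with ha | ha
  · have hlim : Tendsto (fun t => ENNReal.ofReal t) (𝓝[>] 0) (𝓝 (ENNReal.ofReal 0)) :=
      (ENNReal.continuous_ofReal.tendsto 0).mono_left nhdsWithin_le_nhds
    rw [ENNReal.ofReal_eq_zero.2 (min_le_of_left_le ha), ← ENNReal.ofReal_zero]
    refine le_antisymm (ge_of_tendsto hlim ?_) (by simp)
    filter_upwards [Ioo_mem_nhdsGT (zero_lt_one' ℝ)] with t ht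
    exact (h t ht) ▸ measure_mono fun ω (hω : V ω ≤ a) => (hω.trans (ha.trans ht.1.le) : V ω ≤ t)
  rcases lt_or_ge a 1 with ha1 | ha1
  · rw [min_eq_left ha1.le, h a ⟨ha, ha1⟩]
  · have hlim : Tendsto (fun t => ENNReal.ofReal t) (𝓝[<] 1) (𝓝 (ENNReal.ofReal 1)) :=
      (ENNReal.continuous_ofReal.tendsto 1).mono_left nhdsWithin_le_nhds
    rw [min_eq_right ha1, ENNReal.ofReal_one]
    refine le_antisymm prob_le_one (ENNReal.ofReal_one ▸ le_of_tendsto hlim ?_)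
    filter_upwards [Ioo_mem_nhdsLT (zero_lt_one' ℝ)] with t ht
    exact (h t ht) ▸ measure_mono fun ω (hω : V ω ≤ t) => (hω.trans (ht.2.le.trans ha1) : V ω ≤ a)

end Uniform

lemma StieltjesFunction.exists_leftLim_le_le_apply (F : StieltjesFunction ℝ)
    (h0 : Tendsto F atBot (𝓝 0)) (h1 : Tendsto F atTop (𝓝 1)) {t : ℝ} (ht : t ∈ Ioo (0 : ℝ) 1) :
    ∃ x, leftLim F x ≤ t ∧ t ≤ F x ∧ (∀ z < x, F z ≤ t) ∧ ∀ z, x < z → t < leftLim F z := by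
  set S := {z | leftLim F z ≤ t}
  obtain ⟨z₀, hz₀⟩ := (h0.eventually (eventually_lt_nhds ht.1)).exists
  obtain ⟨z₁, hz₁⟩ := (h1.eventually (eventually_gt_nhds ht.2)).exists
  have hS : S.Nonempty := ⟨z₀, (F.mono.leftLim_le le_rfl).trans hz₀.le⟩
  have hSbdd : BddAbove S := ⟨z₁, fun z hz => not_lt.1 fun h =>
    (hz₁.trans_le (F.mono.le_leftLim h)).not_ge hz⟩
  have habove : ∀ z, sSup S < z → t < leftLim F z := fun z hz =>
    not_le.1 fun h => hz.not_ge (le_csSup hSbdd h)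
  have hbelow : ∀ z < sSup S, F z ≤ t := fun z hz => by
    obtain ⟨z', hz'S, hzz'⟩ := exists_lt_of_lt_csSup hS hz
    exact (F.mono.le_leftLim hzz').trans hz'S
  refine ⟨sSup S, ?_, ?_, hbelow, habove⟩
  · exact le_of_tendsto (F.mono.tendsto_leftLim _)
      (eventually_nhdsWithin_of_forall fun z hz => hbelow z hz)
  · exact ge_of_tendsto ((F.right_continuous _).mono_left (nhdsWithin_mono _ Ioi_subset_Ici_self))
      (eventually_nhdsWithin_of_forall fun z hz =>
        ((habove z hz).trans_le (F.mono.leftLim_le le_rfl)).le)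

lemma leftLim_add_mul_le_iff {F : ℝ → ℝ} (hF : Monotone F) {x y t u : ℝ} (hu : u ∈ Icc (0 : ℝ) 1)
    (hbelow : ∀ z < x, F z ≤ t) (habove : ∀ z, x < z → t < leftLim F z) :
    leftLim F y + u * (F y - leftLim F y) ≤ t ↔
      y < x ∨ (y = x ∧ leftLim F x + u * (F x - leftLim F x) ≤ t) := by
  have hjump : 0 ≤ F y - leftLim F y := sub_nonneg.2 (hF.leftLim_le le_rfl)
  rcases lt_trichotomy y x with hyx | rfl | hxy
  · have := mul_le_of_le_one_left hjump hu.2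
    simp only [hyx, true_or, iff_true]
    linarith [hbelow y hyx]
  · simp
  · have := mul_nonneg hu.1 hjump
    simp only [hxy.not_gt, hxy.ne', false_and, or_self, iff_false, not_le]
    linarith [habove y hxy]

section DistTransform

variable {Ω : Type*} [MeasurableSpace Ω] {P : Measure Ω} [IsProbabilityMeasure P] {X U : Ω → ℝ}

lemma measure_preimage_Iio_union_inter_eq (hX : Measurable X) (hU : Measurable U)
    (hUlaw : P.map U = volume.restrict (Ioo (0 : ℝ) 1)) (hXU : IndepFun X U P) {x t : ℝ}
    (hLx : leftLim (cdfOf P X) x ≤ t) (hFx : t ≤ cdfOf P X x) :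
    P (X ⁻¹' Iio x ∪ (X ⁻¹' {x} ∩ U ⁻¹' {u | leftLim (cdfOf P X) x
      + u * (cdfOf P X x - leftLim (cdfOf P X) x) ≤ t})) = ENNReal.ofReal t := by
  set S := {u | leftLim (cdfOf P X) x + u * (cdfOf P X x - leftLim (cdfOf P X) x) ≤ t}
  have hSm : MeasurableSet S := measurableSet_le (by fun_prop) measurable_const
  have hdisj : Disjoint (X ⁻¹' Iio x) (X ⁻¹' {x} ∩ U ⁻¹' S) :=
    disjoint_left.2 fun ω h₁ h₂ => (h₁ : X ω < x).ne h₂.1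
  rw [measure_union hdisj ((hX (measurableSet_singleton x)).inter (hU hSm)),
    hXU.measure_inter_preimage_eq_mul _ _ (measurableSet_singleton x) hSm,
    measure_preimage_Iio_eq_leftLim hX.aemeasurable,
    measure_preimage_singleton_eq_sub_leftLim hX.aemeasurable]
  set L := leftLim (cdfOf P X) x
  set Δ := cdfOf P X x - L
  have hΔ0 : 0 ≤ Δ := sub_nonneg.2 ((monotone_cdfOf P X).leftLim_le le_rfl)
  rcases hΔ0.eq_or_lt' with hΔ0 | hΔ0
  · rw [hΔ0, ENNReal.ofReal_zero, zero_mul, add_zero]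
    congr 1
    linarith
  · have hS : S = Iic ((t - L) / Δ) := by
      ext u
      change L + u * Δ ≤ t ↔ u ≤ (t - L) / Δ
      rw [le_div_iff₀ hΔ0]
      constructor <;> intro <;> linarith
    have hr : (t - L) / Δ ≤ 1 := by
      rw [div_le_one hΔ0]
      linarith
    rw [hS, measure_preimage_Iic_of_map_eq hU.aemeasurable hUlaw hr, ← ENNReal.ofReal_mul hΔ0.le,
      ← ENNReal.ofReal_add (leftLim_cdfOf_nonneg P X x) (by positivity)]
    congr 1
    field_simp
    ring

lemma measure_distTransform_le (hX : Measurable X) (hU : Measurable U)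
    (hUlaw : P.map U = volume.restrict (Ioo (0 : ℝ) 1)) (hXU : IndepFun X U P) {t : ℝ}
    (ht : t ∈ Ioo (0 : ℝ) 1) : P {ω | distTransform P X U ω ≤ t} = ENNReal.ofReal t := by
  have hF := cdfOf_eq_cdf_map (P := P) hX.aemeasurable
  obtain ⟨x, hLx, hFx, hbelow, habove⟩ := (cdf (P.map X)).exists_leftLim_le_le_apply
    (tendsto_cdf_atBot _) (tendsto_cdf_atTop _) ht
  rw [← hF] at hLx hFx hbelow habove
  -- `x` is where `F` crosses `t`: `F̂ ≤ t` iff `X < x`, or `X = x` and `U` is small enough.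
  rw [← measure_preimage_Iio_union_inter_eq hX hU hUlaw hXU hLx hFx]
  refine measure_congr (eventuallyEq_set.2 ?_)
  filter_upwards [ae_mem_Ioo_of_map_eq hU.aemeasurable hUlaw] with ω hω
  simp only [mem_union, mem_inter_iff, mem_preimage, mem_Iio, mem_singleton_iff, mem_ofPred_eq]
  rw [distTransform_eq hX.aemeasurable]
  exact leftLim_add_mul_le_iff (monotone_cdfOf P X) (Ioo_subset_Icc_self hω) hbelow habove

lemma measurable_distTransform (hX : Measurable X) (hU : Measurable U) :
    Measurable (distTransform P X U) := by
  rw [funext (distTransform_eq hX.aemeasurable U)]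
  have := (monotone_cdfOf P X).measurable.comp hX
  have := (monotone_cdfOf P X).leftLim.measurable.comp hX
  fun_prop

lemma distTransform_le_cdfOf (hX : AEMeasurable X P) {ω : Ω} (hU : U ω ≤ 1) :
    distTransform P X U ω ≤ cdfOf P X (X ω) := by
  have := mul_le_of_le_one_left (sub_nonneg.2 ((monotone_cdfOf P X).leftLim_le (le_refl (X ω)))) hU
  rw [distTransform_eq hX]
  linarith

theorem map_distTransform (hX : Measurable X) (hU : Measurable U)
    (hUlaw : P.map U = volume.restrict (Ioo (0 : ℝ) 1)) (hXU : IndepFun X U P) :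
    P.map (distTransform P X U) = volume.restrict (Ioo (0 : ℝ) 1) :=
  map_eq_restrict_Ioo_of_measure_le (measurable_distTransform hX hU) fun _ ht =>
    measure_distTransform_le hX hU hUlaw hXU ht

end DistTransform

lemma monotoneOn_quantileOf {F : ℝ → ℝ} (hF : Monotone F) (h0 : Tendsto F atBot (𝓝 0))
    (h1 : Tendsto F atTop (𝓝 1)) : MonotoneOn (quantileOf F) (Ioo 0 1) := by
  intro p hp q hq hpq
  obtain ⟨z₀, hz₀⟩ := (h0.eventually (eventually_lt_nhds hp.1)).exists
  obtain ⟨z₁, hz₁⟩ := (h1.eventually (eventually_gt_nhds hq.2)).exists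
  refine csInf_le_csInf ⟨z₀, fun x (hx : p ≤ F x) => ?_⟩ ⟨z₁, hz₁.le⟩ fun x hx => hpq.trans hx
  exact not_lt.1 fun hxz => ((hF hxz.le).trans_lt hz₀).not_ge hx

lemma antitoneOn_quantileOf_cdfOf_one_sub {Ω : Type*} [MeasurableSpace Ω] {P : Measure Ω}
    [IsProbabilityMeasure P] {X : Ω → ℝ} (hX : AEMeasurable X P) :
    AntitoneOn (fun u => quantileOf (cdfOf P X) (1 - u)) (Ioo 0 1) := by
  intro u hu v hv huv
  rw [cdfOf_eq_cdf_map hX]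
  exact monotoneOn_quantileOf (monotone_cdf _) (tendsto_cdf_atBot _) (tendsto_cdf_atTop _)
    ⟨sub_pos.2 hv.2, sub_lt_self 1 hv.1⟩ ⟨sub_pos.2 hu.2, sub_lt_self 1 hu.1⟩ (by linarith)

lemma setIntegral_le_setIntegral_of_measure_eq {Ω : Type*} [MeasurableSpace Ω] {μ : Measure Ω}
    [IsFiniteMeasure μ] {f : Ω → ℝ} {A B : Set Ω}
    (hA : MeasurableSet A) (hB : MeasurableSet B) (hfA : IntegrableOn f A μ)
    (hfB : IntegrableOn f B μ) (hAB : μ A = μ B) (c : ℝ) (hBA : ∀ᵐ ω ∂μ, ω ∈ B \ A → f ω ≤ c)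
    (hAB' : ∀ᵐ ω ∂μ, ω ∈ A \ B → c ≤ f ω) : ∫ ω in B, f ω ∂μ ≤ ∫ ω in A, f ω ∂μ := by
  have hdiff : μ.real (B \ A) = μ.real (A \ B) := by
    have h₁ := measure_inter_add_sdiff (μ := μ) B hA
    have h₂ := measure_inter_add_sdiff (μ := μ) A hB
    rw [inter_comm] at h₁
    rw [measureReal_def, measureReal_def,
      (ENNReal.add_right_inj (measure_ne_top μ (A ∩ B))).1 (h₁.trans (h₂.trans hAB).symm)]
  have hle : ∫ ω in B \ A, f ω ∂μ ≤ ∫ ω in A \ B, f ω ∂μ :=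
    calc ∫ ω in B \ A, f ω ∂μ ≤ ∫ _ in B \ A, c ∂μ :=
          setIntegral_mono_ae_restrict (hfB.mono_set sdiff_subset) (integrableOn_const)
            ((ae_restrict_iff' (hB.diff hA)).2 hBA)
      _ = ∫ _ in A \ B, c ∂μ := by rw [setIntegral_const, setIntegral_const, hdiff]
      _ ≤ ∫ ω in A \ B, f ω ∂μ :=
          setIntegral_mono_ae_restrict integrableOn_const (hfA.mono_set sdiff_subset)
            ((ae_restrict_iff' (hA.diff hB)).2 hAB')
  rw [← integral_inter_add_sdiff hA hfB, ← integral_inter_add_sdiff hB hfA, inter_comm]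
  linarith

section LayerCake

variable {Ω : Type*} [MeasurableSpace Ω] {μ : Measure Ω} [SFinite μ] {X g : Ω → ℝ}

lemma integral_Ioi_indicator_Iio {x : ℝ} (hx : 0 ≤ x) (c : ℝ) :
    ∫ s in Ioi 0, (Iio x).indicator (fun _ => c) s = x * c := by
  rw [integral_indicator measurableSet_Iio, Measure.restrict_restrict measurableSet_Iio,
    setIntegral_const, measureReal_def, Iio_inter_Ioi, Real.volume_Ioo, sub_zero,
    ENNReal.toReal_ofReal hx, smul_eq_mul]

lemma integrable_indicator_superlevel_prod (hX : Measurable X) (hX0 : ∀ ω, 0 ≤ X ω)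
    (hg : AEStronglyMeasurable g μ) (hXg : Integrable (fun ω => X ω * g ω) μ) :
    Integrable ({p : ℝ × Ω | p.1 < X p.2}.indicator fun p => g p.2)
      ((volume.restrict (Ioi 0)).prod μ) := by
  have hm : MeasurableSet {p : ℝ × Ω | p.1 < X p.2} :=
    measurableSet_lt measurable_fst (hX.comp measurable_snd)
  refine (integrable_prod_iff' (hg.comp_snd.indicator hm)).2 ⟨ae_of_all _ fun ω => ?_, ?_⟩
  · change Integrable ((Iio (X ω)).indicator fun _ => g ω) _
    refine (integrable_indicator_iff measurableSet_Iio).2 (integrableOn_const ?_)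
    rw [Measure.restrict_apply measurableSet_Iio, Iio_inter_Ioi, Real.volume_Ioo]
    exact ENNReal.ofReal_ne_top
  · refine hXg.norm.congr (ae_of_all _ fun ω => ?_)
    change ‖X ω * g ω‖ = ∫ s in Ioi 0, ‖(Iio (X ω)).indicator (fun _ => g ω) s‖
    simp_rw [norm_indicator_eq_indicator_norm]
    rw [integral_Ioi_indicator_Iio (hX0 ω), norm_mul, Real.norm_of_nonneg (hX0 ω)]

lemma integral_mul_eq_integral_Ioi_integral_indicator (hX : Measurable X) (hX0 : ∀ ω, 0 ≤ X ω)
    (hg : AEStronglyMeasurable g μ) (hXg : Integrable (fun ω => X ω * g ω) μ) :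
    ∫ ω, X ω * g ω ∂μ = ∫ s in Ioi 0, ∫ ω, {ω | s < X ω}.indicator g ω ∂μ := by
  have H := integrable_indicator_superlevel_prod hX hX0 hg hXg
  calc ∫ ω, X ω * g ω ∂μ = ∫ ω, (∫ s in Ioi 0, (Iio (X ω)).indicator (fun _ => g ω) s) ∂μ :=
        integral_congr_ae (ae_of_all _ fun ω => (integral_Ioi_indicator_Iio (hX0 ω) _).symm)
    _ = _ := (integral_prod_symm _ H).symm.trans (integral_prod _ H)

theorem integral_mul_le_integral_mul_of_setIntegral_le {g₁ g₂ : Ω → ℝ} (hX : Measurable X)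
    (hX0 : ∀ ω, 0 ≤ X ω) (hg₁ : AEStronglyMeasurable g₁ μ) (hg₂ : AEStronglyMeasurable g₂ μ)
    (hi₁ : Integrable (fun ω => X ω * g₁ ω) μ) (hi₂ : Integrable (fun ω => X ω * g₂ ω) μ)
    (h : ∀ s, IntegrableOn g₁ {ω | s < X ω} μ → IntegrableOn g₂ {ω | s < X ω} μ →
      ∫ ω in {ω | s < X ω}, g₁ ω ∂μ ≤ ∫ ω in {ω | s < X ω}, g₂ ω ∂μ) :
    ∫ ω, X ω * g₁ ω ∂μ ≤ ∫ ω, X ω * g₂ ω ∂μ := by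
  have H₁ := integrable_indicator_superlevel_prod hX hX0 hg₁ hi₁
  have H₂ := integrable_indicator_superlevel_prod hX hX0 hg₂ hi₂
  rw [integral_mul_eq_integral_Ioi_integral_indicator hX hX0 hg₁ hi₁,
    integral_mul_eq_integral_Ioi_integral_indicator hX hX0 hg₂ hi₂]
  refine integral_mono_ae H₁.integral_prod_left H₂.integral_prod_left ?_
  filter_upwards [H₁.prod_right_ae, H₂.prod_right_ae] with s h₁ h₂
  have hs : MeasurableSet {ω | s < X ω} := measurableSet_lt measurable_const hX
  rw [integral_indicator hs, integral_indicator hs]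
  exact h s ((integrable_indicator_iff hs).1 h₁) ((integrable_indicator_iff hs).1 h₂)

end LayerCake

lemma integrableOn_comp_preimage_iff {Ω β : Type*} [MeasurableSpace Ω] [MeasurableSpace β]
    {P : Measure Ω} {g : Ω → β} (hg : Measurable g) {f : β → ℝ}
    (hf : AEStronglyMeasurable f (P.map g)) {S : Set β} (hS : MeasurableSet S) :
    IntegrableOn (fun ω => f (g ω)) (g ⁻¹' S) P ↔ IntegrableOn f S (P.map g) := by
  rw [IntegrableOn, IntegrableOn, Measure.restrict_map hg hS,
    integrable_map_measure (Measure.restrict_map hg hS ▸ hf.restrict) hg.aemeasurable]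
  rfl

lemma AntitoneOn.aestronglyMeasurable_restrict {Φ : ℝ → ℝ} (hΦ : AntitoneOn Φ (Ioo 0 1)) :
    AEStronglyMeasurable Φ (volume.restrict (Ioo (0 : ℝ) 1)) :=
  (aemeasurable_restrict_of_antitoneOn measurableSet_Ioo hΦ).aestronglyMeasurable

section Rearrangement

variable {Ω : Type*} [MeasurableSpace Ω] {P : Measure Ω} [IsProbabilityMeasure P]
  {Φ : ℝ → ℝ} {ξ W V : Ω → ℝ}

lemma measure_preimage_Ioi_cdfOf_of_map_eq (hξ : Measurable ξ) (hV : AEMeasurable V P)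
    (hVlaw : P.map V = volume.restrict (Ioo (0 : ℝ) 1)) (s : ℝ) :
    P (V ⁻¹' Ioi (cdfOf P ξ s)) = P {ω | s < ξ ω} := by
  rw [← compl_Iic, preimage_compl, prob_compl_eq_one_sub₀ (hV.nullMeasurable measurableSet_Iic),
    measure_preimage_Iic_of_map_eq hV hVlaw (cdfOf_le_one P ξ s), cdfOf,
    ENNReal.ofReal_toReal (measure_ne_top _ _),
    ← prob_compl_eq_one_sub (measurableSet_le hξ measurable_const)]
  congr 1
  ext ω
  simp

lemma setOf_lt_ae_eq_preimage_Ioi_cdfOf (hξ : Measurable ξ) (hW : Measurable W)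
    (hWlaw : P.map W = volume.restrict (Ioo (0 : ℝ) 1)) (hWξ : ∀ᵐ ω ∂P, W ω ≤ cdfOf P ξ (ξ ω))
    (s : ℝ) : {ω | s < ξ ω} =ᵐ[P] W ⁻¹' Ioi (cdfOf P ξ s) := by
  refine (ae_eq_of_ae_subset_of_measure_ge ?_
    (measure_preimage_Ioi_cdfOf_of_map_eq hξ hW.aemeasurable hWlaw s).ge
    (hW measurableSet_Ioi).nullMeasurableSet (measure_ne_top _ _)).symm
  filter_upwards [hWξ] with ω hω hsW
  exact not_le.1 fun hξs => (hω.trans (monotone_cdfOf P ξ hξs)).not_gt hsW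

lemma setIntegral_comp_le_of_map_eq (hΦ : AntitoneOn Φ (Ioo 0 1)) (hξ : Measurable ξ)
    (hW : Measurable W) (hV : Measurable V) (hWlaw : P.map W = volume.restrict (Ioo (0 : ℝ) 1))
    (hVlaw : P.map V = volume.restrict (Ioo (0 : ℝ) 1))
    (hWξ : ∀ᵐ ω ∂P, W ω ≤ cdfOf P ξ (ξ ω)) (s : ℝ)
    (h₁ : IntegrableOn (fun ω => Φ (W ω)) {ω | s < ξ ω} P)
    (h₂ : IntegrableOn (fun ω => Φ (V ω)) {ω | s < ξ ω} P) :
    ∫ ω in {ω | s < ξ ω}, Φ (W ω) ∂P ≤ ∫ ω in {ω | s < ξ ω}, Φ (V ω) ∂P := by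
  set b := cdfOf P ξ s
  have hA := setOf_lt_ae_eq_preimage_Ioi_cdfOf hξ hW hWlaw hWξ s
  have hΦm := hΦ.aestronglyMeasurable_restrict
  have hWV : ∫ ω in W ⁻¹' Ioi b, Φ (W ω) ∂P = ∫ ω in V ⁻¹' Ioi b, Φ (V ω) ∂P := by
    rw [← setIntegral_map measurableSet_Ioi (hWlaw ▸ hΦm) hW.aemeasurable,
      ← setIntegral_map measurableSet_Ioi (hVlaw ▸ hΦm) hV.aemeasurable, hWlaw, hVlaw]
  have hB : IntegrableOn (fun ω => Φ (V ω)) (V ⁻¹' Ioi b) P := by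
    rw [integrableOn_comp_preimage_iff hV (hVlaw ▸ hΦm) measurableSet_Ioi, hVlaw, ← hWlaw,
      ← integrableOn_comp_preimage_iff hW (hWlaw ▸ hΦm) measurableSet_Ioi]
    exact h₁.congr_set_ae hA.symm
  rw [setIntegral_congr_set hA, hWV]
  have hV01 := ae_mem_Ioo_of_map_eq hV.aemeasurable hVlaw
  have hW01 := ae_mem_Ioo_of_map_eq hW.aemeasurable hWlaw
  refine setIntegral_le_setIntegral_of_measure_eq (measurableSet_lt measurable_const hξ)
    (hV measurableSet_Ioi) h₂ hB
    (measure_preimage_Ioi_cdfOf_of_map_eq hξ hV.aemeasurable hVlaw s).symm (Φ b) ?_ ?_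
  · filter_upwards [hV01, hW01, hA] with ω hVω hWω hAω ⟨hbV, hsξ⟩
    have hWb : W ω ≤ b := not_lt.1 ((Iff.of_eq hAω).not.1 hsξ)
    exact hΦ ⟨hWω.1.trans_le hWb, hbV.trans hVω.2⟩ hVω hbV.le
  · filter_upwards [hV01, hW01, hA] with ω hVω hWω hAω ⟨hsξ, hbV⟩
    have hbW : b < W ω := (Iff.of_eq hAω).1 hsξ
    exact hΦ hVω ⟨hVω.1.trans_le (not_lt.1 hbV), hbW.trans hWω.2⟩ (not_lt.1 hbV)

theorem integral_mul_comp_le_of_map_eq (hΦ : AntitoneOn Φ (Ioo 0 1)) (hξ : Measurable ξ)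
    (hξ0 : ∀ ω, 0 ≤ ξ ω) (hW : Measurable W) (hV : Measurable V)
    (hWlaw : P.map W = volume.restrict (Ioo (0 : ℝ) 1))
    (hVlaw : P.map V = volume.restrict (Ioo (0 : ℝ) 1))
    (hWξ : ∀ᵐ ω ∂P, W ω ≤ cdfOf P ξ (ξ ω))
    (hiW : Integrable (fun ω => ξ ω * Φ (W ω)) P) (hiV : Integrable (fun ω => ξ ω * Φ (V ω)) P) :
    ∫ ω, ξ ω * Φ (W ω) ∂P ≤ ∫ ω, ξ ω * Φ (V ω) ∂P :=
  integral_mul_le_integral_mul_of_setIntegral_le hξ hξ0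
    ((hWlaw ▸ hΦ.aestronglyMeasurable_restrict).comp_aemeasurable hW.aemeasurable)
    ((hVlaw ▸ hΦ.aestronglyMeasurable_restrict).comp_aemeasurable hV.aemeasurable) hiW hiV
    (setIntegral_comp_le_of_map_eq hΦ hξ hW hV hWlaw hVlaw hWξ)

end Rearrangement

theorem stmt_10_general {Ω : Type*} [MeasurableSpace Ω] (P : Measure Ω) [IsProbabilityMeasure P]
    (X₀ : Ω → ℝ) (hX₀m : Measurable X₀)   -- represents the fixed cdf F
    (ξ₁ ξ₂ U : Ω → ℝ) (hξ₁m : Measurable ξ₁) (hξ₂m : Measurable ξ₂) (hUm : Measurable U)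
    (hξ₁nn : ∀ ω, 0 ≤ ξ₁ ω) (hξ₂nn : ∀ ω, 0 ≤ ξ₂ ω)
    (l : ℝ) (hl0 : 0 < l) (hl1 : l < 1)
    (Zl : Ω → ℝ) (hZl : Zl = fun ω => l * ξ₁ ω + (1 - l) * ξ₂ ω)
    (hU : Measure.map U P = (MeasureTheory.volume.restrict (Set.Ioo (0:ℝ) 1)))
    (hindep1 : ProbabilityTheory.IndepFun ξ₁ U P)
    (hindep2 : ProbabilityTheory.IndepFun ξ₂ U P)
    (hindepl : ProbabilityTheory.IndepFun Zl U P)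
    (hint1 : Integrable (fun ω =>
      ξ₁ ω * quantileOf (cdfOf P X₀) (1 - distTransform P ξ₁ U ω)) P)
    (hint2 : Integrable (fun ω =>
      ξ₂ ω * quantileOf (cdfOf P X₀) (1 - distTransform P ξ₂ U ω)) P)
    (hint1l : Integrable (fun ω =>
      ξ₁ ω * quantileOf (cdfOf P X₀) (1 - distTransform P Zl U ω)) P)
    (hint2l : Integrable (fun ω =>
      ξ₂ ω * quantileOf (cdfOf P X₀) (1 - distTransform P Zl U ω)) P) :
    l * ∫ ω, ξ₁ ω * quantileOf (cdfOf P X₀) (1 - distTransform P ξ₁ U ω) ∂P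
      + (1 - l) * ∫ ω, ξ₂ ω * quantileOf (cdfOf P X₀) (1 - distTransform P ξ₂ U ω) ∂P
    ≤ ∫ ω, Zl ω * quantileOf (cdfOf P X₀) (1 - distTransform P Zl U ω) ∂P := by
  have hZm : Measurable Zl := hZl ▸ by fun_prop
  set Φ := fun u => quantileOf (cdfOf P X₀) (1 - u)
  have hΦ : AntitoneOn Φ (Ioo 0 1) := antitoneOn_quantileOf_cdfOf_one_sub hX₀m.aemeasurable
  have hU1 : ∀ᵐ ω ∂P, U ω ≤ 1 := (ae_mem_Ioo_of_map_eq hUm.aemeasurable hU).mono fun _ h => h.2.le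
  have key : ∀ ξ : Ω → ℝ, Measurable ξ → (∀ ω, 0 ≤ ξ ω) → IndepFun ξ U P →
      Integrable (fun ω => ξ ω * Φ (distTransform P ξ U ω)) P →
      Integrable (fun ω => ξ ω * Φ (distTransform P Zl U ω)) P →
      ∫ ω, ξ ω * Φ (distTransform P ξ U ω) ∂P ≤ ∫ ω, ξ ω * Φ (distTransform P Zl U ω) ∂P :=
    fun ξ hξ hξ0 hξU => integral_mul_comp_le_of_map_eq hΦ hξ hξ0 (measurable_distTransform hξ hUm)
      (measurable_distTransform hZm hUm) (map_distTransform hξ hUm hU hξU)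
      (map_distTransform hZm hUm hU hindepl)
      (hU1.mono fun _ => distTransform_le_cdfOf hξ.aemeasurable)
  have hlin : ∫ ω, Zl ω * Φ (distTransform P Zl U ω) ∂P
      = l * ∫ ω, ξ₁ ω * Φ (distTransform P Zl U ω) ∂P
        + (1 - l) * ∫ ω, ξ₂ ω * Φ (distTransform P Zl U ω) ∂P := by
    rw [← integral_const_mul, ← integral_const_mul,
      ← integral_add (hint1l.const_mul l) (hint2l.const_mul (1 - l))]
    congr 1 with ω
    rw [hZl]
    ring
  rw [hlin]
  exact add_le_add (mul_le_mul_of_nonneg_left (key ξ₁ hξ₁m hξ₁nn hindep1 hint1 hint1l) hl0.le)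
    (mul_le_mul_of_nonneg_left (key ξ₂ hξ₂m hξ₂nn hindep2 hint2 hint2l) (sub_nonneg.2 hl1.le))

/-- Concavity of the map `ξ ↦ E[ξ F⁻¹(1 − F̂_ξ(ξ; U))]` on nonnegative random variables:
for `Z_λ = λξ₁ + (1−λ)ξ₂` the value at `Z_λ` dominates the convex combination of the
values at `ξ₁` and `ξ₂`. -/
theorem stmt_10 {Ω : Type*} [MeasurableSpace Ω] (P : Measure Ω) [IsProbabilityMeasure P]
    (X₀ : Ω → ℝ) (hX₀m : Measurable X₀)   -- represents the fixed cdf F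
    (ξ₁ ξ₂ U : Ω → ℝ) (hξ₁m : Measurable ξ₁) (hξ₂m : Measurable ξ₂) (hUm : Measurable U)
    (hξ₁nn : ∀ ω, 0 ≤ ξ₁ ω) (hξ₂nn : ∀ ω, 0 ≤ ξ₂ ω)
    (l : ℝ) (hl0 : 0 < l) (hl1 : l < 1)
    (Zl : Ω → ℝ) (hZl : Zl = fun ω => l * ξ₁ ω + (1 - l) * ξ₂ ω)
    (hU : Measure.map U P = (MeasureTheory.volume.restrict (Set.Ioo (0:ℝ) 1)))
    (hindep1 : ProbabilityTheory.IndepFun ξ₁ U P)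
    (hindep2 : ProbabilityTheory.IndepFun ξ₂ U P)
    (hindepl : ProbabilityTheory.IndepFun Zl U P)
    (hint1 : Integrable (fun ω =>
      ξ₁ ω * quantileOf (cdfOf P X₀) (1 - distTransform P ξ₁ U ω)) P)
    (hint2 : Integrable (fun ω =>
      ξ₂ ω * quantileOf (cdfOf P X₀) (1 - distTransform P ξ₂ U ω)) P)
    (hintl : Integrable (fun ω =>
      Zl ω * quantileOf (cdfOf P X₀) (1 - distTransform P Zl U ω)) P)
    (hint1l : Integrable (fun ω =>
      ξ₁ ω * quantileOf (cdfOf P X₀) (1 - distTransform P Zl U ω)) P)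
    (hint2l : Integrable (fun ω =>
      ξ₂ ω * quantileOf (cdfOf P X₀) (1 - distTransform P Zl U ω)) P) :
    l * ∫ ω, ξ₁ ω * quantileOf (cdfOf P X₀) (1 - distTransform P ξ₁ U ω) ∂P
      + (1 - l) * ∫ ω, ξ₂ ω * quantileOf (cdfOf P X₀) (1 - distTransform P ξ₂ U ω) ∂P
    ≤ ∫ ω, Zl ω * quantileOf (cdfOf P X₀) (1 - distTransform P Zl U ω) ∂P :=
  stmt_10_general P X₀ hX₀m ξ₁ ξ₂ U hξ₁m hξ₂m hUm hξ₁nn hξ₂nn l hl0 hl1 Zl hZl hU hindep1 hindep2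
    hindepl hint1 hint2 hint1l hint2l
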